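/- arXiv:1604.01091 — 6 statements merged into one kernel-verified Lean document; each statement's English description precedes it below -/
import Mathlib

section
/- Under lexicographic utilities, if the exchange graph G(p) of an assignment p contains a cycle with at least one edge corresponding to a strict preference, then p is not Pareto optimal. -/
open Finset

def IsPartition {N O : Type*} (p : N → Finset O) : Prop :=
  ∀ o : O, ∃! i : N, o ∈ p i

def Dominates {N O : Type*} [Fintype N] (u : N → O → ℝ) (q p : N → Finset O) : Prop :=
  (∀ i, ∑ o ∈ p i, u i o ≤ ∑ o ∈ q i, u i o) ∧ ∃ i, ∑ o ∈ p i, u i o < ∑ o ∈ q i, u i o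

def ParetoOptimal {N O : Type*} [Fintype N] (u : N → O → ℝ) (p : N → Finset O) : Prop :=
  ¬ ∃ q : N → Finset O, IsPartition q ∧ Dominates u q p

/-- Successor index in a cycle of length k. -/
def nextFin {k : ℕ} (hk : 0 < k) (l : Fin k) : Fin k := ⟨(l.1 + 1) % k, Nat.mod_lt _ hk⟩

/-- Utilities are lexicographic: each object is worth more than all strictly less
preferred objects together. -/
def Lexicographic {N O : Type*} [Fintype O] (u : N → O → ℝ) : Prop :=
  ∀ i o, (∑ o' ∈ univ.filter (fun o' => u i o' < u i o), u i o') < u i o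

/-! Rotating the objects one step along the cycle is a permutation of `O`, so it turns the
partition `p` into another partition. Each holder of a cycle object exchanges it for a weakly
preferred one, and some holder for a strictly preferred one; by additivity of utilities the rotated
assignment Pareto dominates `p`. -/

theorem nextFin_eq_finRotate {k : ℕ} (hk : 0 < k) (l : Fin k) : nextFin hk l = finRotate k l := by
  rw [finRotate_apply]
  ext
  simp [nextFin, Fin.val_add]

theorem Function.Injective.exists_perm_rotate {O : Type*} {k : ℕ} {c : Fin k → O}
    (hc : Function.Injective c) :
    ∃ σ : Equiv.Perm O, (∀ l, σ (c l) = c (finRotate k l)) ∧ ∀ o ∉ Set.range c, σ o = o := by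
  classical
  refine ⟨(finRotate k).extendDomain (Equiv.ofInjective c hc), fun l => ?_, fun o ho => ?_⟩
  · exact (finRotate k).extendDomain_apply_image (Equiv.ofInjective c hc) l
  · exact Equiv.Perm.extendDomain_apply_not_subtype _ _ ho

theorem IsPartition.map_perm {N O : Type*} {p : N → Finset O} (hp : IsPartition p)
    (σ : Equiv.Perm O) : IsPartition fun i => (p i).map σ.toEmbedding := by
  intro o
  simpa only [mem_map_equiv] using hp (σ.symm o)

theorem dominates_map_perm {N O : Type*} [Fintype N] {u : N → O → ℝ} {p : N → Finset O}
    {σ : Equiv.Perm O} (hle : ∀ i, ∀ o ∈ p i, u i o ≤ u i (σ o))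
    (hlt : ∃ i, ∃ o ∈ p i, u i o < u i (σ o)) :
    Dominates u (fun i => (p i).map σ.toEmbedding) p := by
  simp only [Dominates, sum_map, Equiv.coe_toEmbedding]
  obtain ⟨i, o, ho, hlt⟩ := hlt
  exact ⟨fun i => sum_le_sum (hle i), i, sum_lt_sum (hle i) ⟨o, ho, hlt⟩⟩

theorem not_paretoOptimal_of_perm {N O : Type*} [Fintype N] {u : N → O → ℝ}
    {p : N → Finset O} (hp : IsPartition p) (σ : Equiv.Perm O)
    (hle : ∀ i, ∀ o ∈ p i, u i o ≤ u i (σ o)) (hlt : ∃ i, ∃ o ∈ p i, u i o < u i (σ o)) :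
    ¬ ParetoOptimal u p :=
  not_not_intro ⟨_, hp.map_perm σ, dominates_map_perm hle hlt⟩

/-- If the exchange graph G(p) has a cycle with a strict edge, p is not Pareto optimal
(under lexicographic utilities). -/
theorem cycle_with_strict_edge_implies_not_pareto_optimal
    {N O : Type*} [Fintype N]
    (u : N → O → ℝ)
    (p : N → Finset O) (hp : IsPartition p)
    (k : ℕ) (hk : 2 ≤ k) (c : Fin k → O) (hinj : Function.Injective c)
    (hedge : ∀ l : Fin k, ∀ i : N, c l ∈ p i →
      u i (c l) ≤ u i (c (nextFin (by omega) l)))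
    (hstrict : ∃ l : Fin k, ∃ i : N, c l ∈ p i ∧
      u i (c l) < u i (c (nextFin (by omega) l))) :
    ¬ ParetoOptimal u p := by
  simp only [nextFin_eq_finRotate] at hedge hstrict
  obtain ⟨σ, hσ_cycle, hσ_fix⟩ := hinj.exists_perm_rotate
  refine not_paretoOptimal_of_perm hp σ (fun i o ho => ?_) ?_
  · by_cases hoc : o ∈ Set.range c
    · obtain ⟨l, rfl⟩ := hoc
      rw [hσ_cycle]
      exact hedge l i ho
    · rw [hσ_fix o hoc]
  · obtain ⟨l, i, hl, hlt⟩ := hstrict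
    exact ⟨i, c l, hl, by rwa [hσ_cycle]⟩
end

section
/- Under bivalued utilities with values α > β > 0, if there exists an assignment q with |q(i) ∩ E_i^1| ≥ |p(i) ∩ E_i^1| for all agents i, and some agent j with |q(j) ∩ E_j^1| > |p(j) ∩ E_j^1| and p(j) ∩ E_j^2 ≠ ∅, then p is Pareto dominated (hence not Pareto optimal). -/
open Finset

/-!
Each agent `i` keeps, out of her top objects in `q i`, as many as she has in `p i`, and `j` one
more; the sets kept are disjoint since `q` is a partition, and `j` can give up a low-valued object
because she holds one in `p j`. The remaining objects are dealt out so that every bundle has its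
size in `p`. A bivalued utility of a bundle depends only on its size and its number of top
objects, so no agent loses and `j` gains `α - β`.
-/

open Function

section

variable {N O : Type*}

theorem Finset.exists_pairwise_disjoint_card_eq [Fintype N] [DecidableEq O] (s : Finset O)
    (c : N → ℕ) (hc : ∑ i, c i = #s) :
    ∃ f : N → Finset O, Pairwise (Disjoint on f) ∧ (∀ i, #(f i) = c i) ∧
      univ.biUnion f = s := by
  classical
  obtain ⟨e⟩ : Nonempty (s ≃ Σ i, Fin (c i)) := Fintype.card_eq.1 (by simp [hc])
  refine ⟨fun i => ({x | (e x).1 = i} : Finset s).map (.subtype _), fun i k hik => ?_,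
    fun i => ?_, ?_⟩
  · simp only [onFun, disjoint_left, mem_map, mem_filter, mem_univ, true_and]
    rintro _ ⟨x, rfl, rfl⟩ ⟨y, hy, hxy⟩
    exact hik (by rw [← hy, Subtype.val_injective hxy])
  · rw [card_map, ← Fintype.card_subtype,
      Fintype.card_congr (e.subtypeEquiv (q := (·.1 = i)) fun _ => Iff.rfl),
      Fintype.card_congr (Equiv.sigmaSubtype i), Fintype.card_fin]
  · ext o
    simp

theorem isPartition_iff {p : N → Finset O} :
    IsPartition p ↔ Pairwise (Disjoint on p) ∧ ∀ o, ∃ i, o ∈ p i := by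
  refine ⟨fun hp => ⟨fun i k hik => disjoint_left.2 fun o hi hk => hik ?_,
    fun o => (hp o).exists⟩, fun ⟨hdisj, hcover⟩ o => ?_⟩
  · exact (hp o).unique hi hk
  · obtain ⟨i, hi⟩ := hcover o
    exact ⟨i, hi, fun k hk => by_contra fun hki => disjoint_left.1 (hdisj hki) hk hi⟩

theorem IsPartition.pairwise_disjoint {p : N → Finset O} (hp : IsPartition p) :
    Pairwise (Disjoint on p) :=
  (isPartition_iff.1 hp).1

theorem IsPartition.sum_card [Fintype N] [Fintype O] {p : N → Finset O} (hp : IsPartition p) :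
    ∑ i, #(p i) = Fintype.card O := by
  classical
  rw [← card_biUnion fun i _ k _ hik => hp.pairwise_disjoint hik, ← card_univ]
  congr
  exact eq_univ_of_forall fun o => mem_biUnion.2 ⟨_, mem_univ _, (hp o).exists.choose_spec⟩

theorem exists_isPartition_superset_card [Fintype N] [Fintype O] (T : N → Finset O)
    (hT : Pairwise (Disjoint on T)) (m : N → ℕ) (hTm : ∀ i, #(T i) ≤ m i)
    (hm : ∑ i, m i = Fintype.card O) :
    ∃ q : N → Finset O, IsPartition q ∧ ∀ i, T i ⊆ q i ∧ #(q i) = m i := by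
  classical
  set S := univ.biUnion T
  have hS : #S = ∑ i, #(T i) := card_biUnion fun i _ k _ hik => hT hik
  obtain ⟨f, hf, hf_card, hf_union⟩ :=
    exists_pairwise_disjoint_card_eq Sᶜ (fun i => m i - #(T i))
      (by rw [card_compl, hS, ← hm, ← sum_tsub_distrib _ fun i _ => hTm i])
  have hf_compl : ∀ i, f i ⊆ Sᶜ := fun i => hf_union ▸ subset_biUnion_of_mem f (mem_univ i)
  have hTf : ∀ i k, Disjoint (T i) (f k) := fun i k =>
    disjoint_left.2 fun o hoT hof =>
      mem_compl.1 (hf_compl k hof) (mem_biUnion.2 ⟨i, mem_univ i, hoT⟩)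
  refine ⟨fun i => T i ∪ f i, isPartition_iff.2 ⟨fun i k hik => ?_, fun o => ?_⟩,
    fun i => ⟨subset_union_left, ?_⟩⟩
  · exact disjoint_union_left.2 ⟨disjoint_union_right.2 ⟨hT hik, hTf i k⟩,
      disjoint_union_right.2 ⟨(hTf k i).symm, hf hik⟩⟩
  · by_cases hoS : o ∈ S
    · obtain ⟨i, -, hi⟩ := mem_biUnion.1 hoS
      exact ⟨i, mem_union_left _ hi⟩
    · obtain ⟨i, -, hi⟩ := mem_biUnion.1 (hf_union ▸ mem_compl.2 hoS)
      exact ⟨i, mem_union_right _ hi⟩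
  · rw [card_union_of_disjoint (hTf i i), hf_card, Nat.add_sub_cancel' (hTm i)]

section Bivalued

variable {α β : ℝ} {v : O → ℝ}

theorem sum_eq_of_bivalued (hv : ∀ o, v o = α ∨ v o = β) (B : Finset O) :
    ∑ o ∈ B, v o = #(B.filter (v · = α)) * α + (#B - #(B.filter (v · = α))) * β := by
  rw [← sum_filter_add_sum_filter_not B (v · = α),
    sum_congr rfl fun o ho => (mem_filter.1 ho).2,
    sum_congr rfl fun o ho => (hv o).resolve_left (mem_filter.1 ho).2, sum_const, sum_const,
    nsmul_eq_mul, nsmul_eq_mul, ← card_filter_add_card_filter_not (s := B) (v · = α)]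
  push_cast
  ring

theorem sum_sub_sum_of_bivalued (hv : ∀ o, v o = α ∨ v o = β) {B C : Finset O}
    (h : #B = #C) :
    ∑ o ∈ C, v o - ∑ o ∈ B, v o =
      (#(C.filter (v · = α)) - #(B.filter (v · = α)) : ℝ) * (α - β) := by
  rw [sum_eq_of_bivalued hv, sum_eq_of_bivalued hv, h]
  ring

theorem sum_le_sum_of_bivalued (hαβ : β ≤ α) (hv : ∀ o, v o = α ∨ v o = β)
    {B C : Finset O} (h : #B = #C) (htop : #(B.filter (v · = α)) ≤ #(C.filter (v · = α))) :
    ∑ o ∈ B, v o ≤ ∑ o ∈ C, v o := by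
  rw [← sub_nonneg, sum_sub_sum_of_bivalued hv h]
  exact mul_nonneg (sub_nonneg.2 (by exact_mod_cast htop)) (sub_nonneg.2 hαβ)

theorem sum_lt_sum_of_bivalued (hαβ : β < α) (hv : ∀ o, v o = α ∨ v o = β)
    {B C : Finset O} (h : #B = #C) (htop : #(B.filter (v · = α)) < #(C.filter (v · = α))) :
    ∑ o ∈ B, v o < ∑ o ∈ C, v o := by
  rw [← sub_pos, sum_sub_sum_of_bivalued hv h]
  exact mul_pos (sub_pos.2 (by exact_mod_cast htop)) (sub_pos.2 hαβ)

end Bivalued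

end

theorem bivalued_sufficient_condition_for_domination_general
    {N O : Type*} [Fintype N] [Fintype O]
    (α β : ℝ) (hαβ : β < α)
    (u : N → O → ℝ) (hbi : ∀ i o, u i o = α ∨ u i o = β)
    (p q : N → Finset O) (hp : IsPartition p) (hq : IsPartition q)
    (hge : ∀ i, ((p i).filter (fun o => u i o = α)).card ≤
      ((q i).filter (fun o => u i o = α)).card)
    (hj : ∃ j, ((p j).filter (fun o => u j o = α)).card <
        ((q j).filter (fun o => u j o = α)).card ∧
      ((p j).filter (fun o => u j o = β)).Nonempty) :
    ∃ q' : N → Finset O, IsPartition q' ∧ Dominates u q' p := by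
  classical
  obtain ⟨j, hj_top, o, ho⟩ := hj
  let b i := #((p i).filter (u i · = α)) + if i = j then 1 else 0
  have hb_q : ∀ i, b i ≤ #((q i).filter (u i · = α)) := fun i => by
    by_cases hij : i = j
    · subst hij; simpa [b] using hj_top
    · simpa [b, hij] using hge i
  have hb_p : ∀ i, b i ≤ #(p i) := fun i => by
    by_cases hij : i = j
    · subst hij
      have hlow : ∃ o ∈ p i, u i o ≠ α :=
        ⟨o, (mem_filter.1 ho).1, (mem_filter.1 ho).2 ▸ hαβ.ne⟩
      simpa [b] using card_lt_card (filter_ssubset.2 hlow)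
    · simpa [b, hij] using card_filter_le (p i) (u i · = α)
  choose T hT_top hT_card using fun i => exists_subset_card_eq (hb_q i)
  have hT_disj : Pairwise (Disjoint on T) := fun i k hik =>
    (hq.pairwise_disjoint hik).mono ((hT_top i).trans (filter_subset _ _))
      ((hT_top k).trans (filter_subset _ _))
  obtain ⟨q', hq', hTq'⟩ := exists_isPartition_superset_card T hT_disj (fun i => #(p i))
    (fun i => (hT_card i).trans_le (hb_p i)) hp.sum_card
  have hb_q' : ∀ i, b i ≤ #((q' i).filter (u i · = α)) := fun i =>
    hT_card i ▸ card_le_card fun o ho =>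
      mem_filter.2 ⟨(hTq' i).1 ho, (mem_filter.1 (hT_top i ho)).2⟩
  refine ⟨q', hq', fun i => ?_, j, ?_⟩
  · exact sum_le_sum_of_bivalued hαβ.le (hbi i) (hTq' i).2.symm (le_self_add.trans (hb_q' i))
  · exact sum_lt_sum_of_bivalued hαβ (hbi j) (hTq' j).2.symm (by simpa [b] using hb_q' j)

/-- Bivalued utilities: if some assignment q gives every agent at least as many top
objects as p, and some agent j strictly more top objects while j holds a low-valued
object in p, then p is Pareto dominated. -/
theorem bivalued_sufficient_condition_for_domination
    {N O : Type*} [Fintype N] [Fintype O]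
    (α β : ℝ) (hβ : 0 < β) (hαβ : β < α)
    (u : N → O → ℝ) (hbi : ∀ i o, u i o = α ∨ u i o = β)
    (p q : N → Finset O) (hp : IsPartition p) (hq : IsPartition q)
    (hge : ∀ i, ((p i).filter (fun o => u i o = α)).card ≤
      ((q i).filter (fun o => u i o = α)).card)
    (hj : ∃ j, ((p j).filter (fun o => u j o = α)).card <
        ((q j).filter (fun o => u j o = α)).card ∧
      ((p j).filter (fun o => u j o = β)).Nonempty) :
    ∃ q' : N → Finset O, IsPartition q' ∧ Dominates u q' p :=
  bivalued_sufficient_condition_for_domination_general α β hαβ u hbi p q hp hq hge hj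
end

section
/- Under bivalued utilities (values α > β > 0), an assignment p is Pareto dominated if and only if there exists an assignment q such that |q(i) ∩ E_i^1| ≥ |p(i) ∩ E_i^1| for every agent i, and there exists an agent j with |q(j) ∩ E_j^1| > |p(j) ∩ E_j^1| and p(j) ∩ E_j^2 ≠ ∅. -/
open Finset

/-!
If `q` dominates `p`, the total welfare `α |O| - (α - β) · #(items held by agents valuing them
at β)` rises, so `q` hands out strictly fewer bottom items. Suppose no reassignment raises the
top-count of an agent holding a bottom item without lowering any other top-count. Reading the
top-counts of `p` as demands in Hall's theorem, every such agent then lies in a tight set, and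
tight sets are closed under unions (submodularity of `T ↦ #(⋃ i ∈ T, E_i)`), so one tight set
`W` contains them all. On `W`, `q` cannot give more top items than `p`; outside `W`, `p` gives no
bottom items, so `q` also gives fewer bottom items on `W`. Hence `W` is worse off in total under
`q`, contradicting domination. Conversely, a top-count improvement for an agent `j` holding a
bottom item lets `j` trade one bottom item for one top item while all other counts are kept.
-/

open Function

section Families

variable {N O : Type*} [DecidableEq O]

theorem sum_card_le_card_biUnion {S E : N → Finset O} (hS : Pairwise (Disjoint on S))
    (hSE : ∀ i, S i ⊆ E i) (T : Finset N) : ∑ i ∈ T, #(S i) ≤ #(T.biUnion E) := by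
  rw [← card_biUnion fun i _ j _ hij => hS hij]
  exact card_le_card (biUnion_mono fun i _ => hSE i)

theorem exists_pairwise_disjoint_subset_card_eq {E : N → Finset O} {d : N → ℕ}
    (hall : ∀ T : Finset N, ∑ i ∈ T, d i ≤ #(T.biUnion E)) :
    ∃ S : N → Finset O, (∀ i, S i ⊆ E i ∧ #(S i) = d i) ∧ Pairwise (Disjoint on S) := by
  classical
  obtain ⟨f, hf, hfE⟩ := (all_card_le_biUnion_card_iff_exists_injective
    fun x : Σ i, Fin (d i) => E x.1).1 fun s => by
      calc #s ≤ #((s.image Sigma.fst).sigma fun i => (univ : Finset (Fin (d i)))) :=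
            card_le_card fun x hx => mem_sigma.2 ⟨mem_image_of_mem _ hx, mem_univ _⟩
        _ = ∑ i ∈ s.image Sigma.fst, d i := by simp [card_sigma]
        _ ≤ #((s.image Sigma.fst).biUnion E) := hall _
        _ = #(s.biUnion fun x => E x.1) := by rw [image_biUnion]
  refine ⟨fun i => univ.image fun k => f ⟨i, k⟩, fun i => ⟨?_, ?_⟩, fun i i' hii' => ?_⟩
  · simp only [subset_iff, mem_image, mem_univ, true_and, forall_exists_index]
    rintro _ k rfl
    exact hfE _
  · rw [card_image_of_injective _ fun k l hkl => eq_of_heq (Sigma.mk.inj_iff.1 (hf hkl)).2,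
      card_univ, Fintype.card_fin]
  · simp only [onFun, disjoint_left, mem_image, mem_univ, true_and,
      forall_exists_index]
    rintro _ k rfl ⟨l, hl⟩
    exact hii' (congrArg Sigma.fst (hf hl)).symm

variable [Fintype N] [Fintype O]

theorem exists_pairwise_disjoint_superset_card_eq {K : N → Finset O}
    (hK : Pairwise (Disjoint on K)) {c : N → ℕ} (hc : ∑ i, (#(K i) + c i) ≤ Fintype.card O) :
    ∃ S : N → Finset O, (∀ i, K i ⊆ S i ∧ #(S i) = #(K i) + c i) ∧ Pairwise (Disjoint on S) := by
  set R := univ \ univ.biUnion K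
  have hR : ∑ i, c i ≤ #R := by
    rw [sum_add_distrib] at hc
    rw [card_sdiff_of_subset (subset_univ _), card_univ,
      card_biUnion fun i _ j _ hij => hK hij]
    omega
  obtain ⟨P, hPR, hP⟩ := exists_pairwise_disjoint_subset_card_eq (E := fun _ => R) (d := c)
    fun T => by
      rcases T.eq_empty_or_nonempty with rfl | ⟨i, hi⟩
      · simp
      · exact (sum_le_univ_sum_of_nonneg fun _ => Nat.zero_le _).trans
          (hR.trans (card_le_card (subset_biUnion_of_mem (fun _ => R) hi)))
  have hKP : ∀ i i', Disjoint (K i) (P i') := fun i i' =>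
    disjoint_left.2 fun o hoK hoP =>
      (mem_sdiff.1 ((hPR i').1 hoP)).2 (mem_biUnion.2 ⟨i, mem_univ i, hoK⟩)
  refine ⟨fun i => K i ∪ P i, fun i => ⟨subset_union_left, ?_⟩, fun i i' hii' => ?_⟩
  · rw [card_union_of_disjoint (hKP i i), (hPR i).2]
  · exact disjoint_union_left.2 ⟨disjoint_union_right.2 ⟨hK hii', hKP i i'⟩,
      disjoint_union_right.2 ⟨(hKP i' i).symm, hP hii'⟩⟩

end Families

section Tight

variable {N O : Type*} [DecidableEq O]

/-- Under Hall's condition `∑ i ∈ T, a i ≤ #(T.biUnion E)` this is an equality: the demands of the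
agents in `T` exhaust their neighbourhood. -/
def IsTight (E : N → Finset O) (a : N → ℕ) (T : Finset N) : Prop :=
  #(T.biUnion E) ≤ ∑ i ∈ T, a i

variable [DecidableEq N] {E : N → Finset O} {a : N → ℕ}

theorem IsTight.union {T T' : Finset N} (hT : IsTight E a T) (hT' : IsTight E a T')
    (hall : ∑ i ∈ T ∩ T', a i ≤ #((T ∩ T').biUnion E)) : IsTight E a (T ∪ T') := by
  have hsubmod : #((T ∪ T').biUnion E) + #((T ∩ T').biUnion E) ≤
      #(T.biUnion E) + #(T'.biUnion E) := by
    rw [← card_union_add_card_inter (T.biUnion E), union_biUnion]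
    exact Nat.add_le_add_left (card_le_card (subset_inter
      (biUnion_subset_biUnion_of_subset_left E inter_subset_left)
      (biUnion_subset_biUnion_of_subset_left E inter_subset_right))) _
  have hsum : ∑ i ∈ T ∪ T', a i + ∑ i ∈ T ∩ T', a i = ∑ i ∈ T, a i + ∑ i ∈ T', a i :=
    sum_union_inter
  unfold IsTight at *
  omega

theorem exists_isTight_superset (hall : ∀ T : Finset N, ∑ i ∈ T, a i ≤ #(T.biUnion E))
    (B : Finset N) (hB : ∀ j ∈ B, ∃ T, j ∈ T ∧ IsTight E a T) :
    ∃ W, B ⊆ W ∧ IsTight E a W := by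
  induction B using Finset.induction_on with
  | empty => exact ⟨∅, empty_subset _, by simp [IsTight]⟩
  | insert j B _ ih =>
    obtain ⟨W, hBW, hW⟩ := ih fun k hk => hB k (mem_insert_of_mem hk)
    obtain ⟨T, hjT, hT⟩ := hB j (mem_insert_self j B)
    exact ⟨T ∪ W, insert_subset (mem_union_left _ hjT) (hBW.trans subset_union_right),
      hT.union hW (hall _)⟩

end Tight

namespace IsPartition

variable {N O : Type*} {p : N → Finset O}

theorem pairwise_disjoint_s7 (hp : IsPartition p) : Pairwise (Disjoint on p) := by
  intro i j hij
  refine disjoint_left.2 fun o hi hj => hij ?_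
  obtain ⟨k, -, hk⟩ := hp o
  exact (hk i hi).trans (hk j hj).symm

theorem pairwise_disjoint_filter (hp : IsPartition p) (P : N → O → Prop)
    [∀ i, DecidablePred (P i)] : Pairwise (Disjoint on fun i => (p i).filter (P i)) :=
  fun _ _ hij => disjoint_filter_filter (hp.pairwise_disjoint_s7 hij)

theorem sum_card_s7 [Fintype N] [Fintype O] (hp : IsPartition p) :
    ∑ i, #(p i) = Fintype.card O := by
  classical
  rw [← card_biUnion fun i _ j _ hij => hp.pairwise_disjoint_s7 hij, ← card_univ]
  congr 1
  refine eq_univ_of_forall fun o => ?_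
  obtain ⟨i, hi, -⟩ := hp o
  exact mem_biUnion.2 ⟨i, mem_univ i, hi⟩

theorem sum_card_filter_le_card_biUnion [Fintype O] [DecidableEq O] (hp : IsPartition p)
    (P : N → O → Prop) [∀ i, DecidablePred (P i)] (T : Finset N) :
    ∑ i ∈ T, #((p i).filter (P i)) ≤ #(T.biUnion fun i => univ.filter (P i)) :=
  sum_card_le_card_biUnion (hp.pairwise_disjoint_filter P)
    (fun _ => filter_subset_filter _ (subset_univ _)) T

end IsPartition

theorem exists_isPartition_of_pairwise_disjoint {N O : Type*} [Fintype O] [Nonempty N]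
    {S : N → Finset O} (hS : Pairwise (Disjoint on S)) :
    ∃ q : N → Finset O, IsPartition q ∧ ∀ i, S i ⊆ q i := by
  classical
  obtain ⟨j⟩ := ‹Nonempty N›
  refine ⟨update S j (S j ∪ univ.filter fun o => ∀ i, o ∉ S i), fun o => ?_, fun i => ?_⟩
  · by_cases ho : ∃ i, o ∈ S i
    · obtain ⟨i, hi⟩ := ho
      have hmem : ∀ i', o ∈ update S j (S j ∪ univ.filter fun o => ∀ i, o ∉ S i) i' ↔
          o ∈ S i' := fun i' => by
        rcases eq_or_ne i' j with rfl | h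
        · simpa using fun h => (h i hi).elim
        · rw [update_of_ne h]
      refine ⟨i, (hmem i).2 hi, fun i' hi' => ?_⟩
      by_contra hne
      exact disjoint_left.1 (hS hne) ((hmem i').1 hi') hi
    · push Not at ho
      refine ⟨j, by simp [ho], fun i' (hi' : o ∈ _) => ?_⟩
      by_contra hne
      rw [update_of_ne hne] at hi'
      exact ho i' hi'
  · rcases eq_or_ne i j with rfl | h
    · simp
    · rw [update_of_ne h]

section Bivalued

variable {O : Type*} {f : O → ℝ} {a b : ℝ}

theorem filter_not_eq_eq_filter_eq (hf : ∀ o, f o = a ∨ f o = b) (hab : a ≠ b)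
    (s : Finset O) : s.filter (fun o => ¬f o = a) = s.filter (f · = b) :=
  filter_congr fun o _ => by rcases hf o with h | h <;> simp [h, hab, hab.symm]

theorem card_eq_card_filter_add_card_filter (hf : ∀ o, f o = a ∨ f o = b) (hab : a ≠ b)
    (s : Finset O) : #s = #(s.filter (f · = a)) + #(s.filter (f · = b)) := by
  rw [← filter_not_eq_eq_filter_eq hf hab, card_filter_add_card_filter_not]

theorem sum_eq_mul_card_filter_add_mul_card_filter (hf : ∀ o, f o = a ∨ f o = b) (hab : a ≠ b)
    (s : Finset O) :
    ∑ o ∈ s, f o = a * #(s.filter (f · = a)) + b * #(s.filter (f · = b)) := by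
  rw [← sum_filter_add_sum_filter_not s (f · = a), filter_not_eq_eq_filter_eq hf hab,
    sum_congr rfl fun o ho => (mem_filter.1 ho).2, sum_const, nsmul_eq_mul, mul_comm,
    sum_congr rfl fun o ho => (mem_filter.1 ho).2, sum_const, nsmul_eq_mul, mul_comm b]

theorem sum_add_sub_mul_le_sum (hf : ∀ o, f o = a ∨ f o = b) (hba : b < a) {s t : Finset O}
    (hst : #s = #t) {m : ℕ} (hm : #(s.filter (f · = a)) + m ≤ #(t.filter (f · = a))) :
    ∑ o ∈ s, f o + (a - b) * m ≤ ∑ o ∈ t, f o := by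
  have hs := card_eq_card_filter_add_card_filter hf hba.ne' s
  have ht := card_eq_card_filter_add_card_filter hf hba.ne' t
  have hm' : (#(s.filter (f · = a)) : ℝ) + m ≤ #(t.filter (f · = a)) := by exact_mod_cast hm
  have hcard : (#(s.filter (f · = a)) : ℝ) + #(s.filter (f · = b)) =
      #(t.filter (f · = a)) + #(t.filter (f · = b)) := by exact_mod_cast hs.symm.trans (hst.trans ht)
  rw [sum_eq_mul_card_filter_add_mul_card_filter hf hba.ne',
    sum_eq_mul_card_filter_add_mul_card_filter hf hba.ne']
  linear_combination (a - b) * hm' + b * hcard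

end Bivalued

section Pareto

variable {N O : Type*} [Fintype O] {α β : ℝ} {u : N → O → ℝ} {p q : N → Finset O}

theorem exists_isPartition_card_filter_lt_of_not_isTight [DecidableEq O] (hp : IsPartition p)
    {j : N} (hj : ∀ T, j ∈ T →
      ¬IsTight (fun i => univ.filter (u i · = α)) (fun i => #((p i).filter (u i · = α))) T) :
    ∃ q, IsPartition q ∧
      (∀ i, #((p i).filter (u i · = α)) ≤ #((q i).filter (u i · = α))) ∧
      #((p j).filter (u j · = α)) < #((q j).filter (u j · = α)) := by
  classical
  obtain ⟨S, hSE, hS⟩ := exists_pairwise_disjoint_subset_card_eq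
    (d := fun i => #((p i).filter (u i · = α)) + (Pi.single j 1 : N → ℕ) i) fun T => by
      rw [sum_add_distrib, sum_pi_single']
      split_ifs with hjT
      · exact not_le.1 (hj T hjT)
      · simpa using hp.sum_card_filter_le_card_biUnion (fun i o => u i o = α) T
  have : Nonempty N := ⟨j⟩
  obtain ⟨q, hq, hSq⟩ := exists_isPartition_of_pairwise_disjoint hS
  have hcount : ∀ i, #((p i).filter (u i · = α)) + (Pi.single j 1 : N → ℕ) i ≤
      #((q i).filter (u i · = α)) := fun i =>
    (hSE i).2 ▸ card_le_card fun o ho => mem_filter.2 ⟨hSq i ho, (mem_filter.1 ((hSE i).1 ho)).2⟩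
  exact ⟨q, hq, fun i => (Nat.le_add_right _ _).trans (hcount i), by simpa using hcount j⟩

variable [Fintype N]

theorem IsPartition.sum_card_filter_add_sum_card_filter (hp : IsPartition p)
    (hbi : ∀ i o, u i o = α ∨ u i o = β) (hαβ : α ≠ β) :
    ∑ i, #((p i).filter (u i · = α)) + ∑ i, #((p i).filter (u i · = β)) = Fintype.card O := by
  rw [← sum_add_distrib, ← hp.sum_card_s7]
  exact sum_congr rfl fun i _ => (card_eq_card_filter_add_card_filter (hbi i) hαβ (p i)).symm

theorem IsPartition.sum_sum_eq_sub_mul (hp : IsPartition p)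
    (hbi : ∀ i o, u i o = α ∨ u i o = β) (hαβ : α ≠ β) :
    ∑ i, ∑ o ∈ p i, u i o =
      α * Fintype.card O - (α - β) * ∑ i, #((p i).filter (u i · = β)) := by
  rw [← hp.sum_card_filter_add_sum_card_filter hbi hαβ]
  simp only [sum_eq_mul_card_filter_add_mul_card_filter (hbi _) hαβ, sum_add_distrib, ← mul_sum]
  push_cast
  ring

theorem not_dominates_of_isTight [DecidableEq O] (hβ : 0 < β) (hαβ : β < α)
    (hbi : ∀ i o, u i o = α ∨ u i o = β) (hp : IsPartition p)
    (hq : IsPartition q) {W : Finset N}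
    (hW : IsTight (fun i => univ.filter (u i · = α)) (fun i => #((p i).filter (u i · = α))) W)
    (hWbot : ∀ i, ((p i).filter (u i · = β)).Nonempty → i ∈ W) : ¬Dominates u q p := by
  rintro ⟨hle, j, hlt⟩
  have htop : ∑ i ∈ W, #((q i).filter (u i · = α)) ≤ ∑ i ∈ W, #((p i).filter (u i · = α)) :=
    (hq.sum_card_filter_le_card_biUnion (fun i o => u i o = α) W).trans hW
  have hbot : ∑ i, #((q i).filter (u i · = β)) < ∑ i, #((p i).filter (u i · = β)) := by
    have hsum := sum_lt_sum (s := univ) (fun i _ => hle i) ⟨j, mem_univ j, hlt⟩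
    rw [hp.sum_sum_eq_sub_mul hbi hαβ.ne', hq.sum_sum_eq_sub_mul hbi hαβ.ne'] at hsum
    have hcast : ((∑ i, #((q i).filter (u i · = β)) : ℕ) : ℝ) <
        ((∑ i, #((p i).filter (u i · = β)) : ℕ) : ℝ) :=
      lt_of_mul_lt_mul_left (a := α - β) (by linarith) (sub_nonneg.2 hαβ.le)
    exact_mod_cast hcast
  have hbotW : ∑ i ∈ W, #((q i).filter (u i · = β)) < ∑ i ∈ W, #((p i).filter (u i · = β)) :=
    calc _ ≤ ∑ i, #((q i).filter (u i · = β)) := sum_le_sum_of_subset (subset_univ W)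
      _ < ∑ i, #((p i).filter (u i · = β)) := hbot
      _ = _ := (sum_subset (subset_univ W) fun i _ hi =>
        card_eq_zero.2 (not_nonempty_iff_eq_empty.1 (mt (hWbot i) hi))).symm
  have hWlt : ∑ i ∈ W, ∑ o ∈ q i, u i o < ∑ i ∈ W, ∑ o ∈ p i, u i o := by
    simp only [sum_eq_mul_card_filter_add_mul_card_filter (hbi _) hαβ.ne', sum_add_distrib,
      ← mul_sum, ← Nat.cast_sum]
    exact add_lt_add_of_le_of_lt (mul_le_mul_of_nonneg_left (by exact_mod_cast htop)
      (hβ.trans hαβ).le) (mul_lt_mul_of_pos_left (by exact_mod_cast hbotW) hβ)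
  exact hWlt.not_ge (sum_le_sum fun i _ => hle i)

theorem exists_dominates_of_card_filter_lt (hβ : 0 < β) (hαβ : β < α)
    (hbi : ∀ i o, u i o = α ∨ u i o = β) (hp : IsPartition p) (hq : IsPartition q)
    (hle : ∀ i, #((p i).filter (u i · = α)) ≤ #((q i).filter (u i · = α))) {j : N}
    (hlt : #((p j).filter (u j · = α)) < #((q j).filter (u j · = α)))
    (hj : ((p j).filter (u j · = β)).Nonempty) :
    ∃ r, IsPartition r ∧ Dominates u r p := by
  classical
  set δ : N → ℕ := Pi.single j 1
  have hδ : ∀ i, δ i ≤ #((p i).filter (u i · = β)) := fun i => by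
    rcases eq_or_ne i j with rfl | h
    · simp only [δ, Pi.single_eq_same]
      exact hj.card_pos
    · simp [δ, h]
  have hroom : ∀ i, #((p i).filter (u i · = α)) + δ i ≤ #((q i).filter (u i · = α)) :=
    fun i => by
      rcases eq_or_ne i j with rfl | h
      · simpa [δ] using hlt
      · simpa [δ, h] using hle i
  choose K hKq hK using fun i => exists_subset_card_eq (hroom i)
  obtain ⟨S, hKS, hS⟩ := exists_pairwise_disjoint_superset_card_eq
    (fun i i' h => (hq.pairwise_disjoint_filter (fun i o => u i o = α) h).mono (hKq i) (hKq i'))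
    (c := fun i => #((p i).filter (u i · = β)) - δ i) (by
      rw [← hp.sum_card_filter_add_sum_card_filter hbi hαβ.ne', ← sum_add_distrib]
      exact (sum_congr rfl fun i _ => by have := hδ i; rw [hK]; omega).le)
  have : Nonempty N := ⟨j⟩
  obtain ⟨r, hr, hSr⟩ := exists_isPartition_of_pairwise_disjoint hS
  have hgain : ∀ i, ∑ o ∈ p i, u i o + (α - β) * δ i ≤ ∑ o ∈ r i, u i o := fun i => by
    have hcard : #(p i) = #(S i) := by
      rw [(hKS i).2, hK, card_eq_card_filter_add_card_filter (hbi i) hαβ.ne' (p i)]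
      have := hδ i
      omega
    have htop : #((p i).filter (u i · = α)) + δ i ≤ #((S i).filter (u i · = α)) :=
      hK i ▸ card_le_card fun o ho => mem_filter.2 ⟨(hKS i).1 ho, (mem_filter.1 (hKq i ho)).2⟩
    calc _ ≤ ∑ o ∈ S i, u i o := sum_add_sub_mul_le_sum (hbi i) hαβ hcard htop
      _ ≤ _ := sum_le_sum_of_subset_of_nonneg (hSr i) fun o _ _ => by
        rcases hbi i o with h | h <;> rw [h] <;> linarith
  refine ⟨r, hr, fun i => ?_, j, ?_⟩
  · have := hgain i
    have : 0 ≤ (α - β) * δ i := mul_nonneg (sub_nonneg.2 hαβ.le) (Nat.cast_nonneg _)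
    linarith
  · have := hgain j
    simp only [δ, Pi.single_eq_same, Nat.cast_one, mul_one] at this
    linarith

end Pareto

/-- Characterization of Pareto domination under bivalued utilities. -/
theorem bivalued_pareto_dominated_iff
    {N O : Type*} [Fintype N] [Fintype O]
    (α β : ℝ) (hβ : 0 < β) (hαβ : β < α)
    (u : N → O → ℝ) (hbi : ∀ i o, u i o = α ∨ u i o = β)
    (p : N → Finset O) (hp : IsPartition p) :
    (∃ q : N → Finset O, IsPartition q ∧ Dominates u q p) ↔
      ∃ q : N → Finset O, IsPartition q ∧
        (∀ i, ((p i).filter (fun o => u i o = α)).card ≤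
          ((q i).filter (fun o => u i o = α)).card) ∧
        ∃ j, ((p j).filter (fun o => u j o = α)).card <
            ((q j).filter (fun o => u j o = α)).card ∧
          ((p j).filter (fun o => u j o = β)).Nonempty := by
  classical
  constructor
  · rintro ⟨q, hq, hdom⟩
    by_contra hno
    obtain ⟨W, hBW, hW⟩ := exists_isTight_superset (hp.sum_card_filter_le_card_biUnion _)
      (univ.filter fun j => ((p j).filter (u j · = β)).Nonempty) fun j hj => by
        by_contra! hT
        obtain ⟨q', hq', hle, hlt⟩ := exists_isPartition_card_filter_lt_of_not_isTight hp hT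
        exact hno ⟨q', hq', hle, j, hlt, (mem_filter.1 hj).2⟩
    exact not_dominates_of_isTight hβ hαβ hbi hp hq hW
      (fun i hi => hBW (mem_filter.2 ⟨mem_univ i, hi⟩)) hdom
  · rintro ⟨q, hq, hle, j, hlt, hj⟩
    exact exists_dominates_of_card_filter_lt hβ hαβ hbi hp hq hle hlt hj
end

section
/- For bundles of objects, an agent weakly prefers q(i) to p(i) in the responsive set extension (there exists an injection f : p(i) → q(i) with f(o) ≿_i o for all o ∈ p(i)) if and only if q(i) stochastically dominates p(i) (for every threshold object level, q(i) contains at least as many objects at least that good as p(i)). -/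
/-!
Pushing each object forward along a responsive injection only moves it up, so every upper
contour set of `P` injects into the corresponding one of `Q`. Conversely, stochastic dominance
is Hall's condition for matching each `o ∈ P` to a distinct `o' ∈ Q` with `o' ≿ o`: a family
`s ⊆ P` lies in the upper contour set of its worst element `m`, which is no larger than that of
`Q`, and every object of `Q` at least as good as `m` is an admissible partner of `m`.
-/

open Finset
open scoped Classical

section

variable {O : Type*} {r : O → O → Prop}

theorem Finset.Nonempty.exists_mem_forall_rel [Std.Total r] [IsTrans O r] {S : Finset O}
    (hS : S.Nonempty) : ∃ m ∈ S, ∀ s ∈ S, r s m := by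
  have : Nonempty S := hS.to_subtype
  obtain ⟨m, hm⟩ := (Std.Total.directed (r := r) ((↑) : S → O)).finset_le univ
  exact ⟨m, m.2, fun s hs => hm ⟨s, hs⟩ (mem_univ _)⟩

theorem card_filter_rel_le_of_injOn [IsTrans O r] {P Q : Finset O} {f : O → O}
    (hinj : Set.InjOn f P) (hf : ∀ o ∈ P, f o ∈ Q ∧ r (f o) o) (o : O) :
    #(P.filter (r · o)) ≤ #(Q.filter (r · o)) := by
  refine card_le_card_of_injOn f (fun x hx => ?_) (hinj.mono (coe_subset.mpr (filter_subset _ _)))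
  simp only [mem_coe, mem_filter] at hx ⊢
  exact ⟨(hf x hx.1).1, _root_.trans (hf x hx.1).2 hx.2⟩

variable [Std.Total r] [IsTrans O r]

theorem card_le_card_biUnion_filter_rel {P Q : Finset O}
    (hsd : ∀ o, #(P.filter (r · o)) ≤ #(Q.filter (r · o))) (s : Finset P) :
    #s ≤ #(s.biUnion fun x => Q.filter (r · x)) := by
  rcases s.eq_empty_or_nonempty with rfl | hs
  · simp
  obtain ⟨m, hm, hmin⟩ := (hs.image ((↑) : P → O)).exists_mem_forall_rel (r := r)
  obtain ⟨m, hms, rfl⟩ := mem_image.mp hm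
  calc #s = #(s.image ((↑) : P → O)) := (card_image_of_injective _ Subtype.val_injective).symm
    _ ≤ #(P.filter (r · m)) := card_le_card fun x hx => by
        obtain ⟨x, -, rfl⟩ := mem_image.mp hx
        exact mem_filter.mpr ⟨x.2, hmin _ hx⟩
    _ ≤ #(Q.filter (r · m)) := hsd m
    _ ≤ #(s.biUnion fun x => Q.filter (r · x)) :=
        card_le_card (subset_biUnion_of_mem (fun x : P => Q.filter (r · x)) hms)

theorem exists_injOn_rel_of_card_filter_le {P Q : Finset O}
    (hsd : ∀ o, #(P.filter (r · o)) ≤ #(Q.filter (r · o))) :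
    ∃ f : O → O, Set.InjOn f P ∧ ∀ o ∈ P, f o ∈ Q ∧ r (f o) o := by
  obtain ⟨g, hg, hgQ⟩ :=
    (all_card_le_biUnion_card_iff_existsInjective' _).mp (card_le_card_biUnion_filter_rel hsd)
  refine ⟨fun o => if h : o ∈ P then g ⟨o, h⟩ else o,
    fun x (hx : x ∈ P) y (hy : y ∈ P) hxy => ?_, fun o ho => ?_⟩
  · have : g ⟨x, hx⟩ = g ⟨y, hy⟩ := by simpa only [dif_pos hx, dif_pos hy] using hxy
    exact congrArg Subtype.val (hg this)
  · simpa [dif_pos ho] using hgQ ⟨o, ho⟩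

end

theorem responsive_iff_stochastic_dominance_general
    {O : Type*}
    (r : O → O → Prop)
    (htot : ∀ a b, r a b ∨ r b a)
    (htrans : ∀ a b c, r a b → r b c → r a c)
    (P Q : Finset O) :
    (∃ f : O → O, Set.InjOn f ↑P ∧ ∀ o ∈ P, f o ∈ Q ∧ r (f o) o) ↔
      (∀ o : O, (P.filter (fun x => r x o)).card ≤ (Q.filter (fun x => r x o)).card) := by
  have : Std.Total r := ⟨htot⟩
  have : IsTrans O r := ⟨htrans⟩
  exact ⟨fun ⟨_, hinj, hf⟩ => card_filter_rel_le_of_injOn hinj hf,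
    exists_injOn_rel_of_card_filter_le⟩

/-- Responsive set extension dominance coincides with stochastic dominance for
bundles of objects, for a complete transitive (reflexive) preference `r`
(`r a b` means `a ≿ b`). -/
theorem responsive_iff_stochastic_dominance
    {O : Type*} [Fintype O] [DecidableEq O]
    (r : O → O → Prop)
    (htot : ∀ a b, r a b ∨ r b a)
    (htrans : ∀ a b c, r a b → r b c → r a c)
    (P Q : Finset O) :
    (∃ f : O → O, Set.InjOn f ↑P ∧ ∀ o ∈ P, f o ∈ Q ∧ r (f o) o) ↔
      (∀ o : O, (P.filter (fun x => r x o)).card ≤ (Q.filter (fun x => r x o)).card) :=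
  responsive_iff_stochastic_dominance_general r htot htrans P Q
end

section
/- If an assignment p admits a one-for-two Pareto improvement swap, then p is not necessarily Pareto optimal: there exist additive utilities consistent with the agents' ordinal preferences under which p is Pareto dominated. -/
open Finset

/-- `u` is an additive utility profile consistent with the ordinal preferences `r`
(`r i a b` means agent `i` weakly prefers object `a` to object `b`). -/
def Consistent {N O : Type*} (r : N → O → O → Prop) (u : N → O → ℝ) : Prop :=
  (∀ i o o', r i o o' ↔ u i o' ≤ u i o) ∧ ∀ i o, 0 < u i o

/-- `p` is necessarily Pareto optimal. -/
def NecPO {N O : Type*} [Fintype N] (r : N → O → O → Prop) (p : N → Finset O) : Prop :=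
  ∀ u : N → O → ℝ, Consistent r u → ParetoOptimal u p

/-- `p` is possibly Pareto optimal. -/
def PossPO {N O : Type*} [Fintype N] (r : N → O → O → Prop) (p : N → Finset O) : Prop :=
  ∃ u : N → O → ℝ, Consistent r u ∧ ParetoOptimal u p

/-- `p` admits a one-for-two Pareto improvement swap. -/
def HasSwap {N O : Type*} (r : N → O → O → Prop) (p : N → Finset O) : Prop :=
  ∃ (i j : N) (o₁ o₂ oₖ : O), i ≠ j ∧ o₁ ≠ o₂ ∧ o₁ ∈ p i ∧ o₂ ∈ p i ∧ oₖ ∈ p j ∧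
    (r i oₖ o₁ ∧ ¬ r i o₁ oₖ) ∧ r i o₁ o₂

/-!
Rank an agent's objects by the number of objects strictly worse: every positive strictly
increasing function of this rank is a consistent utility. With utility `3 ^ rank`, agent
`i` values one better object above any two worse ones; with utility `card O + 1 + rank`, every
other agent values any two objects above any single one. Under these utilities the swap strictly
improves `i`, does not hurt `j`, and leaves everyone else's bundle unchanged.
-/

section Rank

variable {O : Type*} [Fintype O] {r : O → O → Prop}

open Classical

variable (r) in
noncomputable def prefRank (o : O) : ℕ := #{o' | ¬ r o' o}

theorem prefRank_le_prefRank (htrans : ∀ a b c, r a b → r b c → r a c) {o o' : O} (h : r o o') :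
    prefRank r o' ≤ prefRank r o := by
  unfold prefRank
  gcongr with x
  exact fun hxo => htrans x o o' hxo h

theorem prefRank_lt_prefRank_of_not (htot : ∀ a b, r a b ∨ r b a)
    (htrans : ∀ a b c, r a b → r b c → r a c) {o o' : O} (h : ¬ r o o') :
    prefRank r o < prefRank r o' := by
  have ho'o : r o' o := (htot o o').resolve_left h
  unfold prefRank
  refine Finset.card_lt_card ⟨?_, fun hsub => ?_⟩
  · intro x
    simp only [mem_filter, mem_univ, true_and]
    exact fun hxo hxo' => hxo (htrans x o' o hxo' ho'o)
  · have hrefl : r o o := (htot o o).elim id id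
    simpa [h, hrefl] using @hsub o

theorem prefRank_le_prefRank_iff (htot : ∀ a b, r a b ∨ r b a)
    (htrans : ∀ a b c, r a b → r b c → r a c) {o o' : O} :
    prefRank r o' ≤ prefRank r o ↔ r o o' :=
  ⟨fun hle => by_contra fun h => (prefRank_lt_prefRank_of_not htot htrans h).not_ge hle,
    prefRank_le_prefRank htrans⟩

variable (r) in
theorem prefRank_le_card (o : O) : prefRank r o ≤ Fintype.card O :=
  card_filter_le _ _

end Rank

theorem consistent_comp_prefRank {N O : Type*} [Fintype O] {r : N → O → O → Prop}
    (htot : ∀ i a b, r i a b ∨ r i b a) (htrans : ∀ i a b c, r i a b → r i b c → r i a c)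
    {f : N → ℕ → ℝ} (hf : ∀ i, StrictMono (f i)) (hpos : ∀ i k, 0 < f i k) :
    Consistent r (fun i o => f i (prefRank (r i) o)) :=
  ⟨fun i _ _ => ((hf i).le_iff_le.trans (prefRank_le_prefRank_iff (htot i) (htrans i))).symm,
    fun i _ => hpos i _⟩

theorem pow_add_pow_lt_pow {R : Type*} [Semiring R] [LinearOrder R] [IsStrictOrderedRing R]
    {x : R} (hx : 2 < x) {a b c : ℕ} (hba : b ≤ a) (hac : a < c) :
    x ^ a + x ^ b < x ^ c := by
  have hx1 : 1 ≤ x := one_le_two.trans hx.le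
  calc x ^ a + x ^ b ≤ 2 * x ^ a := by rw [two_mul]; gcongr
    _ < x * x ^ a := by gcongr
    _ = x ^ (a + 1) := (pow_succ' x a).symm
    _ ≤ x ^ c := pow_le_pow_right₀ hx1 hac

theorem IsPartition.eq_of_mem {N O : Type*} {p : N → Finset O} (hp : IsPartition p) {o : O}
    {a b : N} (ha : o ∈ p a) (hb : o ∈ p b) : a = b :=
  (hp o).unique ha hb

section Transfer

variable {N O : Type*} [DecidableEq N] [DecidableEq O]

def transfer (p : N → Finset O) (o : O) (j : N) : N → Finset O :=
  fun a => if a = j then insert o (p a) else (p a).erase o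

theorem mem_transfer {p : N → Finset O} {o o' : O} {j a : N} :
    o' ∈ transfer p o j a ↔ if o' = o then a = j else o' ∈ p a := by
  unfold transfer
  split_ifs <;> simp_all

theorem IsPartition.transfer {p : N → Finset O} (hp : IsPartition p) (o : O) (j : N) :
    IsPartition (transfer p o j) := by
  intro o'
  simp only [mem_transfer]
  split_ifs
  exacts [existsUnique_eq, hp o']

theorem sum_transfer {M : Type*} [AddCommGroup M] {p : N → Finset O} (hp : IsPartition p)
    {o : O} {i : N} (ho : o ∈ p i) (j : N) (f : O → M) (a : N) :
    ∑ x ∈ transfer p o j a, f x =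
      ∑ x ∈ p a, f x + (if a = j then f o else 0) - (if a = i then f o else 0) := by
  unfold transfer
  by_cases haj : a = j <;> by_cases hai : a = i
  · subst haj hai
    simp [insert_eq_of_mem ho]
  · have hoa : o ∉ p a := fun h => hai (hp.eq_of_mem h ho)
    subst haj
    simp [hai, sum_insert hoa, add_comm]
  · subst hai
    simp [haj, sum_erase_eq_sub ho]
  · have hoa : o ∉ p a := fun h => hai (hp.eq_of_mem h ho)
    simp [haj, hai, erase_eq_of_notMem hoa]

def exchange (p : N → Finset O) (o₁ o₂ oₖ : O) (i j : N) : N → Finset O :=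
  transfer (transfer (transfer p o₁ j) o₂ j) oₖ i

theorem IsPartition.exchange {p : N → Finset O} (hp : IsPartition p) (o₁ o₂ oₖ : O) (i j : N) :
    IsPartition (exchange p o₁ o₂ oₖ i j) :=
  ((hp.transfer o₁ j).transfer o₂ j).transfer oₖ i

theorem sum_exchange {M : Type*} [AddCommGroup M] {p : N → Finset O} (hp : IsPartition p)
    {o₁ o₂ oₖ : O} {i j : N} (h12 : o₁ ≠ o₂) (h1 : o₁ ∈ p i) (h2 : o₂ ∈ p i) (hk : oₖ ∈ p j)
    (f : O → M) (a : N) :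
    ∑ x ∈ exchange p o₁ o₂ oₖ i j a, f x =
      ∑ x ∈ p a, f x + (if a = j then f o₁ + f o₂ - f oₖ else 0) +
        (if a = i then f oₖ - f o₁ - f o₂ else 0) := by
  have h2' : o₂ ∈ transfer p o₁ j i := mem_transfer.2 (by simp [h12.symm, h2])
  have hk' : oₖ ∈ transfer (transfer p o₁ j) o₂ j j := mem_transfer.2 (by simp [mem_transfer, hk])
  have hp' := hp.transfer o₁ j
  rw [exchange, sum_transfer (hp'.transfer o₂ j) hk', sum_transfer hp' h2', sum_transfer hp h1]
  split_ifs <;> abel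

theorem dominates_exchange [Fintype N] {p : N → Finset O} (hp : IsPartition p)
    {u : N → O → ℝ} {o₁ o₂ oₖ : O} {i j : N} (hij : i ≠ j) (h12 : o₁ ≠ o₂) (h1 : o₁ ∈ p i)
    (h2 : o₂ ∈ p i) (hk : oₖ ∈ p j) (hi : u i o₁ + u i o₂ < u i oₖ)
    (hj : u j oₖ ≤ u j o₁ + u j o₂) :
    Dominates u (exchange p o₁ o₂ oₖ i j) p := by
  have hsum a := sum_exchange hp h12 h1 h2 hk (u a) a
  refine ⟨fun a => ?_, i, ?_⟩
  · rw [hsum a]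
    split_ifs with haj hai hai
    · exact absurd (hai.symm.trans haj) hij
    · subst haj
      linarith
    · subst hai
      linarith
    · simp
  · rw [hsum i]
    simp only [hij, if_true, if_false]
    linarith

end Transfer

/-- If p admits a one-for-two Pareto improvement swap, then p is not necessarily
Pareto optimal: some consistent utilities make p Pareto dominated. -/
theorem swap_implies_not_necessarily_pareto_optimal
    {N O : Type*} [Fintype N] [Fintype O]
    (r : N → O → O → Prop)
    (htot : ∀ i a b, r i a b ∨ r i b a)
    (htrans : ∀ i a b c, r i a b → r i b c → r i a c)
    (p : N → Finset O) (hp : IsPartition p)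
    (hswap : HasSwap r p) :
    ∃ u : N → O → ℝ, Consistent r u ∧
      ∃ q : N → Finset O, IsPartition q ∧ Dominates u q p := by
  classical
  obtain ⟨i, j, o₁, o₂, oₖ, hij, h12, h1, h2, hk, ⟨-, hk1⟩, h21⟩ := hswap
  let f : N → ℕ → ℝ := fun a k => if a = i then 3 ^ k else Fintype.card O + 1 + k
  have hf a : StrictMono (f a) := by
    by_cases ha : a = i
    · simpa [f, ha] using pow_right_strictMono₀ (by norm_num : (1 : ℝ) < 3)
    · intro k l hkl
      simpa [f, ha] using hkl
  have hpos a k : 0 < f a k := by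
    by_cases ha : a = i <;> simp only [f, ha, if_true, if_false] <;> positivity
  refine ⟨_, consistent_comp_prefRank htot htrans hf hpos, _, hp.exchange o₁ o₂ oₖ i j,
    dominates_exchange hp hij h12 h1 h2 hk ?_ ?_⟩
  · simp only [f, if_true]
    exact pow_add_pow_lt_pow (by norm_num) (prefRank_le_prefRank (htrans i) h21)
      (prefRank_lt_prefRank_of_not (htot i) (htrans i) hk1)
  · have hcard : (prefRank (r j) oₖ : ℝ) ≤ Fintype.card O := mod_cast prefRank_le_card _ _
    simp only [f, hij.symm, if_false]
    linarith
end

section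
/- If an assignment p admits no one-for-two Pareto improvement swap, then every agent's bundle consists of a set of her top remaining objects plus at most one additional lower-ranked object: formally, p(i) = T_p(i) ∪ w_p(i) where T_p(i) = {o ∈ p(i) : there is no o' ∉ p(i) with o' ≻_i o} and |w_p(i)| ≤ 1. -/
open Finset
open scoped Classical

theorem hasSwap_of_outside_improvement {N O : Type*} {r : N → O → O → Prop}
    {p : N → Finset O} (hcover : ∀ o, ∃ j, o ∈ p j) {i : N} {a b o' : O}
    (ha : a ∈ p i) (hb : b ∈ p i) (hab : a ≠ b)
    (hout : o' ∉ p i ∧ r i o' a ∧ ¬ r i a o') (hpref : r i a b) : HasSwap r p := by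
  obtain ⟨j, hj⟩ := hcover o'
  have hij : i ≠ j := by
    rintro rfl
    exact hout.1 hj
  exact ⟨i, j, a, b, o', hij, hab, ha, hb, hj, hout.2, hpref⟩

theorem no_swap_implies_at_most_one_nontop_general
    {N O : Type*} [Fintype O]
    (r : N → O → O → Prop)
    (htot : ∀ i a b, r i a b ∨ r i b a)
    (p : N → Finset O) (hp : IsPartition p)
    (hnoswap : ¬ HasSwap r p) :
    ∀ i : N, ((p i).filter
      (fun o => ∃ o' : O, o' ∉ p i ∧ r i o' o ∧ ¬ r i o o')).card ≤ 1 := by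
  intro i
  refine card_le_one.2 fun a ha b hb => ?_
  rw [mem_filter] at ha hb
  obtain ⟨ha, o', hout⟩ := ha
  obtain ⟨hb, o'', hout'⟩ := hb
  have hcover : ∀ o, ∃ j, o ∈ p j := fun o => (hp o).exists
  by_contra hab
  rcases htot i a b with hpref | hpref
  · exact hnoswap (hasSwap_of_outside_improvement hcover ha hb hab hout hpref)
  · exact hnoswap (hasSwap_of_outside_improvement hcover hb ha (Ne.symm hab) hout' hpref)

/-- If p admits no one-for-two Pareto improvement swap, then each agent holds at
most one object to which some object outside her bundle is strictly preferred. -/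
theorem no_swap_implies_at_most_one_nontop
    {N O : Type*} [Fintype N] [Fintype O]
    (r : N → O → O → Prop)
    (htot : ∀ i a b, r i a b ∨ r i b a)
    (htrans : ∀ i a b c, r i a b → r i b c → r i a c)
    (p : N → Finset O) (hp : IsPartition p)
    (hnoswap : ¬ HasSwap r p) :
    ∀ i : N, ((p i).filter
      (fun o => ∃ o' : O, o' ∉ p i ∧ r i o' o ∧ ¬ r i o o')).card ≤ 1 :=
  no_swap_implies_at_most_one_nontop_general r htot p hp hnoswap
end
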